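/- The ℤ_3 polygon action S[g] = (1/2)(a₀/a₁ + a₁/a₂ + a₂/a₀ − a₀²/a₂² − a₂²/a₁² − a₁²/a₀²) is scale invariant: S[λa₀, λa₁, λa₂] = S[a₀, a₁, a₂] for all λ > 0, and S is maximized (with value 0) exactly when a₀ = a₁ = a₂. -/

import Mathlib

/-!
With `x = a₀/a₂`, `y = a₂/a₁`, `z = a₁/a₀` one has `xyz = 1`, so `a₀/a₁ = xy`, `a₁/a₂ = zx`,
`a₂/a₀ = yz`, and the action becomes
`(xy + yz + zx - x² - y² - z²)/2 = -((x - y)² + (y - z)² + (z - x)²)/4 ≤ 0`.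
It vanishes iff `x = y = z`, i.e. `a₀a₁ = a₂²` and `a₀a₂ = a₁²`; subtracting gives
`(a₁ - a₂)(a₀ + a₁ + a₂) = 0`, hence `a₁ = a₂` and then `a₀ = a₁`.
Scale invariance holds because the action depends only on the ratios `aᵢ/aⱼ`.
-/

def z3Action {K : Type*} [Field K] (a0 a1 a2 : K) : K :=
  (1 / 2) * (a0 / a1 + a1 / a2 + a2 / a0
    - a0 ^ 2 / a2 ^ 2 - a2 ^ 2 / a1 ^ 2 - a1 ^ 2 / a0 ^ 2)

section Field

variable {K : Type*} [Field K]

theorem z3Action_mul_left {lam : K} (hlam : lam ≠ 0) (a0 a1 a2 : K) :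
    z3Action (lam * a0) (lam * a1) (lam * a2) = z3Action a0 a1 a2 := by
  simp only [z3Action, mul_pow, mul_div_mul_left _ _ hlam,
    mul_div_mul_left _ _ (pow_ne_zero 2 hlam)]

theorem z3Action_eq_neg_sum_sq [NeZero (2 : K)] {a0 a1 a2 : K}
    (h0 : a0 ≠ 0) (h1 : a1 ≠ 0) (h2 : a2 ≠ 0) :
    z3Action a0 a1 a2 =
      -(1 / 4) * ((a0 / a2 - a2 / a1) ^ 2 + (a2 / a1 - a1 / a0) ^ 2 + (a1 / a0 - a0 / a2) ^ 2) := by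
  have h4 : (4 : K) ≠ 0 := by
    rw [show (4 : K) = 2 ^ 2 by norm_num]
    exact pow_ne_zero 2 two_ne_zero
  unfold z3Action
  field_simp
  ring

end Field

section Ordered

variable {K : Type*} [Field K] [LinearOrder K] [IsStrictOrderedRing K]

theorem sum_sq_sub_cyclic_eq_zero_iff {x y z : K} :
    (x - y) ^ 2 + (y - z) ^ 2 + (z - x) ^ 2 = 0 ↔ x = y ∧ y = z := by
  refine ⟨fun h => ?_, fun ⟨hxy, hyz⟩ => by simp [hxy, hyz]⟩
  rw [add_eq_zero_iff_of_nonneg (by positivity) (sq_nonneg _),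
    add_eq_zero_iff_of_nonneg (sq_nonneg _) (sq_nonneg _)] at h
  obtain ⟨⟨hxy, hyz⟩, -⟩ := h
  exact ⟨sub_eq_zero.1 (pow_eq_zero_iff two_ne_zero |>.1 hxy),
    sub_eq_zero.1 (pow_eq_zero_iff two_ne_zero |>.1 hyz)⟩

theorem z3Action_nonpos {a0 a1 a2 : K} (h0 : 0 < a0) (h1 : 0 < a1) (h2 : 0 < a2) :
    z3Action a0 a1 a2 ≤ 0 := by
  rw [z3Action_eq_neg_sum_sq h0.ne' h1.ne' h2.ne']
  have : 0 ≤ (a0 / a2 - a2 / a1) ^ 2 + (a2 / a1 - a1 / a0) ^ 2 + (a1 / a0 - a0 / a2) ^ 2 := by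
    positivity
  linarith

theorem eq_and_eq_of_mul_eq_sq {a0 a1 a2 : K} (h0 : 0 < a0) (h1 : 0 < a1) (h2 : 0 < a2)
    (h01 : a0 * a1 = a2 ^ 2) (h02 : a0 * a2 = a1 ^ 2) : a0 = a1 ∧ a1 = a2 := by
  have h12 : a1 = a2 := by
    have : (a1 - a2) * (a0 + a1 + a2) = 0 := by linear_combination h01 - h02
    exact sub_eq_zero.1 ((mul_eq_zero.1 this).resolve_right (by positivity : 0 < a0 + a1 + a2).ne')
  subst h12
  exact ⟨mul_right_cancel₀ h1.ne' (by rw [h01, sq]), rfl⟩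

theorem z3Action_eq_zero_iff {a0 a1 a2 : K} (h0 : 0 < a0) (h1 : 0 < a1) (h2 : 0 < a2) :
    z3Action a0 a1 a2 = 0 ↔ a0 = a1 ∧ a1 = a2 := by
  rw [z3Action_eq_neg_sum_sq h0.ne' h1.ne' h2.ne', mul_eq_zero, or_iff_right (by norm_num),
    sum_sq_sub_cyclic_eq_zero_iff, div_eq_div_iff h2.ne' h1.ne', div_eq_div_iff h1.ne' h0.ne']
  refine ⟨fun ⟨h01, h02⟩ => eq_and_eq_of_mul_eq_sq h0 h1 h2 (by linear_combination h01)
    (by linear_combination h02), ?_⟩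
  rintro ⟨rfl, rfl⟩
  exact ⟨rfl, rfl⟩

end Ordered

/-- The `ℤ_3` polygon action
`S(a₀,a₁,a₂) = (1/2)(a₀/a₁ + a₁/a₂ + a₂/a₀ − a₀²/a₂² − a₂²/a₁² − a₁²/a₀²)`
is scale invariant and is maximized (with value 0) exactly at `a₀ = a₁ = a₂`. -/
theorem z3_action_scale_invariant_and_maximized
    (S : ℝ → ℝ → ℝ → ℝ)
    (hS : ∀ a0 a1 a2 : ℝ, S a0 a1 a2 =
      (1 / 2) * (a0 / a1 + a1 / a2 + a2 / a0
        - a0 ^ 2 / a2 ^ 2 - a2 ^ 2 / a1 ^ 2 - a1 ^ 2 / a0 ^ 2)) :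
    (∀ a0 a1 a2 lam : ℝ, 0 < a0 → 0 < a1 → 0 < a2 → 0 < lam →
      S (lam * a0) (lam * a1) (lam * a2) = S a0 a1 a2) ∧
    (∀ a0 a1 a2 : ℝ, 0 < a0 → 0 < a1 → 0 < a2 → S a0 a1 a2 ≤ 0) ∧
    (∀ a0 a1 a2 : ℝ, 0 < a0 → 0 < a1 → 0 < a2 →
      (S a0 a1 a2 = 0 ↔ a0 = a1 ∧ a1 = a2)) := by
  obtain rfl : S = z3Action := funext₃ hS
  exact ⟨fun a0 a1 a2 _ _ _ _ hlam => z3Action_mul_left hlam.ne' a0 a1 a2,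
    fun _ _ _ => z3Action_nonpos, fun _ _ _ => z3Action_eq_zero_iff⟩
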